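/- arXiv:hep-th/0002169 — 3 statements merged into one kernel-verified Lean document; each statement's English description precedes it below -/
import Mathlib

section
/- For every complex number x with 0 < |x| < 2π, setting y = exp(√−1·x) and y^{±1/2} := exp(±√−1·x/2), one has (y^{−1/2} − y^{1/2})^{−2} = − Σ_{g=0}^∞ m_g x^{2g−2}, where m_g := (−1)^{g−1}(2g−1)B_{2g}/(2g)! and the series converges absolutely. Equivalently, 1/(4 sin²(x/2)) = Σ_{g=0}^∞ (−1)^{g−1}(2g−1)(B_{2g}/(2g)!) x^{2g−2}. -/
/-!
The exponential generating function `F(t) = ∑ Bₙ tⁿ/n!` satisfies `F · (eᵗ - 1) = t`;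
differentiating this formally gives `F² eᵗ = F - t F'`, whose `n`-th coefficient is
`(1 - n) Bₙ / n!`. For `|z| < 2π` the bound `|Bₙ|/n! ≤ 4/(2π)ⁿ` (from `ζ(2k) ≤ π²/6`) makes all
these series absolutely convergent, so the formal identities pass to their sums:
`z² eᶻ/(eᶻ - 1)² = ∑ (1 - n) Bₙ zⁿ/n!`. The odd terms vanish,
`(e^{-z/2} - e^{z/2})⁻² = eᶻ/(eᶻ - 1)²`, and substituting `z = ix` gives the expansion.
-/

open Complex Finset Nat Real PowerSeries

namespace PowerSeries

variable {R : Type*} [NormedCommRing R] {p q : R⟦X⟧} {z : R}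

theorem coeff_mul_mul_pow (n : ℕ) :
    coeff n (p * q) * z ^ n =
      ∑ kl ∈ antidiagonal n, coeff kl.1 p * z ^ kl.1 * (coeff kl.2 q * z ^ kl.2) := by
  rw [coeff_mul, sum_mul]
  refine sum_congr rfl fun kl hkl => ?_
  rw [← mem_antidiagonal.mp hkl, pow_add]
  ring

theorem summable_norm_coeff_mul_mul_pow (hp : Summable fun n => ‖coeff n p * z ^ n‖)
    (hq : Summable fun n => ‖coeff n q * z ^ n‖) :
    Summable fun n => ‖coeff n (p * q) * z ^ n‖ := by
  simpa only [coeff_mul_mul_pow] using summable_norm_sum_mul_antidiagonal_of_summable_norm hp hq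

theorem tsum_coeff_mul_mul_pow [CompleteSpace R] (hp : Summable fun n => ‖coeff n p * z ^ n‖)
    (hq : Summable fun n => ‖coeff n q * z ^ n‖) :
    ∑' n, coeff n (p * q) * z ^ n = (∑' n, coeff n p * z ^ n) * ∑' n, coeff n q * z ^ n := by
  simp only [coeff_mul_mul_pow, tsum_mul_tsum_eq_tsum_sum_antidiagonal_of_summable_norm hp hq]

theorem hasSum_coeff_X_mul_pow (z : R) : HasSum (fun n => coeff n (X : R⟦X⟧) * z ^ n) z := by
  convert hasSum_ite_eq 1 z with n
  split_ifs with h <;> simp [coeff_X, h]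

theorem summable_norm_coeff_exp_mul_pow (z : ℂ) :
    Summable fun n => ‖coeff n (exp ℂ) * z ^ n‖ := by
  refine (Real.summable_pow_div_factorial ‖z‖).congr fun n => ?_
  simp [coeff_exp, div_eq_inv_mul]

theorem tsum_coeff_exp_mul_pow (z : ℂ) : ∑' n, coeff n (exp ℂ) * z ^ n = cexp z := by
  simp [coeff_exp, exp_eq_exp_ℂ, NormedSpace.exp_eq_tsum_div, div_eq_inv_mul]

end PowerSeries

theorem bernoulliPowerSeries_sq_mul_exp (A : Type*) [CommRing A] [Algebra ℚ A] :
    bernoulliPowerSeries A ^ 2 * exp A =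
      bernoulliPowerSeries A - X * d⁄dX A (bernoulliPowerSeries A) := by
  have h := bernoulliPowerSeries_mul_exp_sub_one A
  have hd := congrArg (d⁄dX A) h
  rw [Derivation.leibniz, map_sub, derivative_exp, derivative_one, derivative_X, smul_eq_mul,
    smul_eq_mul] at hd
  linear_combination bernoulliPowerSeries A * hd - d⁄dX A (bernoulliPowerSeries A) * h

theorem coeff_bernoulliPowerSeries_sq_mul_exp (A : Type*) [CommRing A] [Algebra ℚ A] (n : ℕ) :
    coeff n (bernoulliPowerSeries A ^ 2 * exp A) =
      algebraMap ℚ A ((1 - n) * (bernoulli n / n !)) := by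
  rw [bernoulliPowerSeries_sq_mul_exp]
  cases n with
  | zero => simp [bernoulliPowerSeries]
  | succ n =>
    simp only [bernoulliPowerSeries, map_sub, coeff_mk, coeff_succ_X_mul, coeff_derivative,
      cast_add, cast_one, sub_add_cancel_right, neg_mul, map_neg, map_mul, map_natCast]
    ring

theorem tsum_one_div_nat_pow_two_mul_le {k : ℕ} (hk : k ≠ 0) :
    ∑' n : ℕ, 1 / (n : ℝ) ^ (2 * k) ≤ π ^ 2 / 6 := by
  refine hasSum_le (fun n => ?_) (hasSum_zeta_nat hk).summable.hasSum hasSum_zeta_two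
  rcases n.eq_zero_or_pos with rfl | hn
  · simp [hk]
  · exact one_div_pow_le_one_div_pow_of_le (mod_cast hn) (by omega)

theorem abs_bernoulli_div_factorial_le (n : ℕ) :
    |(bernoulli n : ℝ)| / n ! ≤ 4 / (2 * π) ^ n := by
  rcases n.even_or_odd' with ⟨k, rfl | rfl⟩
  · rcases eq_or_ne k 0 with rfl | hk
    · norm_num
    have hζ : 2 ^ (2 * k - 1) * π ^ (2 * k) * (|(bernoulli (2 * k) : ℝ)| / (2 * k)!) =
        ∑' n : ℕ, 1 / (n : ℝ) ^ (2 * k) := by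
      have hnonneg : 0 ≤ ∑' n : ℕ, 1 / (n : ℝ) ^ (2 * k) :=
        tsum_nonneg fun n => by positivity
      rw [← abs_of_nonneg hnonneg, (hasSum_zeta_nat hk).tsum_eq]
      simp [abs_div, abs_mul, abs_of_pos pi_pos]
      ring
    have hpow : (2 * π) ^ (2 * k) = 2 * (2 ^ (2 * k - 1) * π ^ (2 * k)) := by
      rw [mul_pow, ← mul_assoc, mul_pow_sub_one (by omega)]
    have hle := (hζ.trans_le (tsum_one_div_nat_pow_two_mul_le hk)).trans
      (by nlinarith [pi_lt_d2, pi_pos] : π ^ 2 / 6 ≤ 2)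
    rw [hpow, le_div_iff₀ (by positivity)]
    linarith
  · rcases eq_or_ne k 0 with rfl | hk
    · norm_num [abs_div]
      rw [div_le_div_iff₀ (by norm_num) (by positivity)]
      linarith [pi_le_four]
    · rw [bernoulli_eq_zero_of_odd (odd_two_mul_add_one k) (by omega)]
      simp only [Rat.cast_zero, abs_zero, zero_div]
      positivity

section

variable {z : ℂ}

theorem summable_norm_coeff_bernoulliPowerSeries_mul_pow (hz : ‖z‖ < 2 * π) :
    Summable fun n => ‖coeff n (bernoulliPowerSeries ℂ) * z ^ n‖ := by
  have hr : ‖z‖ / (2 * π) < 1 := (div_lt_one (by positivity)).mpr hz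
  refine ((summable_geometric_of_lt_one (by positivity) hr).mul_left 4).of_nonneg_of_le
    (fun n => norm_nonneg _) fun n => ?_
  have hB : ‖coeff n (bernoulliPowerSeries ℂ)‖ = |(bernoulli n : ℝ)| / n ! := by
    simp [bernoulliPowerSeries]
  calc ‖coeff n (bernoulliPowerSeries ℂ) * z ^ n‖ ≤ 4 / (2 * π) ^ n * ‖z‖ ^ n := by
        rw [norm_mul, norm_pow, hB]
        exact mul_le_mul_of_nonneg_right (abs_bernoulli_div_factorial_le n) (by positivity)
    _ = 4 * (‖z‖ / (2 * π)) ^ n := by rw [div_pow]; ring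

theorem tsum_coeff_bernoulliPowerSeries_mul_pow_mul_exp_sub_one (hz : ‖z‖ < 2 * π) :
    (∑' n, coeff n (bernoulliPowerSeries ℂ) * z ^ n) * (cexp z - 1) = z := by
  have hF := summable_norm_coeff_bernoulliPowerSeries_mul_pow hz
  have hFE : bernoulliPowerSeries ℂ * exp ℂ = bernoulliPowerSeries ℂ + X := by
    linear_combination bernoulliPowerSeries_mul_exp_sub_one ℂ
  have hsum := tsum_coeff_mul_mul_pow hF (summable_norm_coeff_exp_mul_pow z)
  simp only [hFE, map_add, add_mul, tsum_coeff_exp_mul_pow,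
    (hF.of_norm.hasSum.add (hasSum_coeff_X_mul_pow z)).tsum_eq] at hsum
  linear_combination -hsum

theorem summable_norm_one_sub_mul_bernoulli_div_factorial_mul_pow (hz : ‖z‖ < 2 * π) :
    Summable fun n => ‖(((1 - n) * (bernoulli n / n !) : ℚ) : ℂ) * z ^ n‖ := by
  have hF := summable_norm_coeff_bernoulliPowerSeries_mul_pow hz
  have h := summable_norm_coeff_mul_mul_pow (summable_norm_coeff_mul_mul_pow hF hF)
    (summable_norm_coeff_exp_mul_pow z)
  simpa only [← sq, coeff_bernoulliPowerSeries_sq_mul_exp, eq_ratCast] using h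

theorem tsum_one_sub_mul_bernoulli_div_factorial_mul_pow (hz : ‖z‖ < 2 * π) (hz0 : z ≠ 0) :
    ∑' n, (((1 - n) * (bernoulli n / n !) : ℚ) : ℂ) * z ^ n =
      z ^ 2 * cexp z / (cexp z - 1) ^ 2 := by
  have hF := summable_norm_coeff_bernoulliPowerSeries_mul_pow hz
  have hsum := tsum_coeff_mul_mul_pow (summable_norm_coeff_mul_mul_pow hF hF)
    (summable_norm_coeff_exp_mul_pow z)
  rw [tsum_coeff_mul_mul_pow hF hF, tsum_coeff_exp_mul_pow] at hsum
  simp only [← sq, coeff_bernoulliPowerSeries_sq_mul_exp, eq_ratCast] at hsum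
  have hid := tsum_coeff_bernoulliPowerSeries_mul_pow_mul_exp_sub_one hz
  have hE : cexp z - 1 ≠ 0 := fun h => hz0 (by rw [← hid, h, mul_zero])
  rw [hsum, eq_div_iff (pow_ne_zero 2 hE)]
  linear_combination
    cexp z * ((∑' n, coeff n (bernoulliPowerSeries ℂ) * z ^ n) * (cexp z - 1) + z) * hid

end

theorem one_sub_mul_bernoulli_div_factorial_eq_zero_of_odd {n : ℕ} (hn : Odd n) :
    (1 - n : ℚ) * (bernoulli n / n !) = 0 := by
  rcases eq_or_ne n 1 with rfl | hn1
  · simp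
  · rw [bernoulli_eq_zero_of_odd hn (by grind), zero_div, mul_zero]

theorem exp_neg_half_sub_exp_half_zpow_neg_two (z : ℂ) :
    (cexp (-z / 2) - cexp (z / 2)) ^ (-2 : ℤ) = cexp z / (cexp z - 1) ^ 2 := by
  obtain ⟨w, rfl⟩ : ∃ w, z = 2 * w := ⟨z / 2, by ring⟩
  have h : (cexp w)⁻¹ - cexp w = -((cexp w * cexp w - 1) / cexp w) := by
    field_simp [Complex.exp_ne_zero w]
    ring
  rw [neg_div, mul_div_cancel_left₀ w two_ne_zero, Complex.exp_neg, zpow_neg, zpow_ofNat,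
    two_mul, Complex.exp_add, h, neg_sq, div_pow, inv_div, sq (cexp w)]

/-- For every complex number `x` with `0 < |x| < 2π`, setting `y = exp(√−1·x)`
and `y^{±1/2} := exp(±√−1·x/2)`, one has
`(y^{−1/2} − y^{1/2})^{−2} = − ∑_{g=0}^∞ m_g x^{2g−2}`, where
`m_g := (−1)^{g−1}(2g−1)B_{2g}/(2g)!`, and the series converges absolutely. -/
theorem string_coupling_expansion (x : ℂ)
    (hx0 : 0 < ‖x‖) (hx2 : ‖x‖ < 2 * Real.pi)
    (m : ℕ → ℚ)
    (hm : ∀ g : ℕ, m g = (-1 : ℚ) ^ ((g : ℤ) - 1) * (2 * (g : ℚ) - 1) *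
        bernoulli (2 * g) / (Nat.factorial (2 * g) : ℚ)) :
    Summable (fun g : ℕ => ‖(m g : ℂ) * x ^ (2 * (g : ℤ) - 2)‖) ∧
    (Complex.exp (-(Complex.I * x) / 2) - Complex.exp (Complex.I * x / 2)) ^ (-2 : ℤ)
      = - ∑' g : ℕ, (m g : ℂ) * x ^ (2 * (g : ℤ) - 2) := by
  set c : ℕ → ℂ := fun n => (((1 - n) * (bernoulli n / n !) : ℚ) : ℂ) * (I * x) ^ n with hc
  have hx : x ≠ 0 := norm_pos_iff.mp hx0
  have hz : ‖I * x‖ < 2 * π := by simpa using hx2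
  have hz0 : I * x ≠ 0 := mul_ne_zero I_ne_zero hx
  have hterm : ∀ g : ℕ, (m g : ℂ) * x ^ (2 * (g : ℤ) - 2) = -(c (2 * g) / (I * x) ^ 2) := by
    intro g
    have hxg : x ^ (2 * (g : ℤ) - 2) = x ^ (2 * g) / x ^ 2 := by
      rw [zpow_sub₀ hx]; norm_cast
    have hIx : (I * x) ^ (2 * g) = (-1) ^ g * x ^ (2 * g) := by rw [mul_pow, pow_mul, I_sq]
    rw [hm g, hxg, hc]
    dsimp only
    rw [hIx, mul_pow, I_sq]
    push_cast
    rw [zpow_sub_one₀ (by norm_num), zpow_natCast]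
    field_simp
    ring
  have hdouble : Function.Injective (2 * · : ℕ → ℕ) := mul_right_injective₀ two_ne_zero
  have hc_odd : ∀ n ∉ Set.range (2 * · : ℕ → ℕ), c n = 0 := by
    intro n hn
    have hn_odd : Odd n := by simpa [eq_comm, ← even_iff_two_dvd] using hn
    simp only [hc, one_sub_mul_bernoulli_div_factorial_eq_zero_of_odd hn_odd, Rat.cast_zero,
      zero_mul]
  refine ⟨?_, ?_⟩
  · simp_rw [hterm, norm_neg, norm_div]
    exact ((summable_norm_one_sub_mul_bernoulli_div_factorial_mul_pow hz).comp_injective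
      hdouble).div_const _
  · rw [exp_neg_half_sub_exp_half_zpow_neg_two, tsum_congr hterm, tsum_neg, neg_neg,
      tsum_div_const, hdouble.tsum_eq (Function.support_subset_iff'.mpr hc_odd), hc,
      tsum_one_sub_mul_bernoulli_div_factorial_mul_pow hz hz0]
    field_simp
end

section
/- Let k ∈ ℤ, let Γ be an additive abelian group, let n₀ ∈ ℕ, and let D : ℤ × Γ → ℂ satisfy D(n,γ) = 0 whenever n < −n₀. Let τ, σ ∈ ℂ, let c : Γ → ℂ be an additive group homomorphism, and write e[w] := exp(2π√−1·w), p := e[σ], q := e[τ], ζ^γ := e[c(γ)]. For each integer ℓ ≥ 1 define the Hecke transform (Φ_k|V_ℓ) := ℓ^{k−1} Σ_{a,d ≥ 1, ad = ℓ} Σ_{b=0}^{d−1} d^{−k} Σ_{(n,γ) ∈ ℤ×Γ} D(n,γ) · e[ n(aτ+b)/d + a·c(γ) ]. Assume that the family (ℓ, a, d, b, n, γ) ↦ p^ℓ · ℓ^{k−1} d^{−k} D(n,γ) e[ n(aτ+b)/d + a·c(γ) ], indexed over ℓ ≥ 1, a,d ≥ 1 with ad = ℓ, 0 ≤ b ≤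 d−1, and (n,γ) ∈ ℤ×Γ, is absolutely summable. Then Σ_{ℓ=1}^∞ p^ℓ (Φ_k|V_ℓ) = Σ_{ℓ ≥ 1, (n,γ) ∈ ℤ×Γ} D(ℓn, γ) · Li_{1−k}(p^ℓ q^n ζ^γ), where Li_{1−k}(ξ) := Σ_{h=1}^∞ h^{k−1} ξ^h, and all the sums on both sides converge absolutely. -/
open Complex

/-- `e[w] := exp(2π√−1·w)`. -/
noncomputable def eTwoPiI (w : ℂ) : ℂ := Complex.exp (2 * Real.pi * Complex.I * w)

/-- For an integer `k`, `Li_{1−k}(ξ) := Σ_{h=1}^∞ h^{k−1} ξ^h`. -/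
noncomputable def LiOneSubK (k : ℤ) (ξ : ℂ) : ℂ :=
  ∑' h : ℕ, ((h + 1 : ℕ) : ℂ) ^ (k - 1) * ξ ^ (h + 1)

/-- Index set for the absolute-summability hypothesis: tuples `(ℓ,a,d,b,n,γ)` with
`ℓ ≥ 1`, `a,d ≥ 1`, `ad = ℓ`, `0 ≤ b ≤ d−1`. -/
structure HeckeIndex (Γ : Type*) where
  ℓ : ℕ
  a : ℕ
  d : ℕ
  b : ℕ
  n : ℤ
  γ : Γ
  hℓ : 1 ≤ ℓ
  ha : 1 ≤ a
  hd : 1 ≤ d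
  had : a * d = ℓ
  hb : b < d

/-- The member of the family indexed by `(ℓ,a,d,b,n,γ)`:
`p^ℓ · ℓ^{k−1} d^{−k} D(n,γ) e[ n(aτ+b)/d + a·c(γ) ]`. -/
noncomputable def heckeFamily {Γ : Type*} [AddCommGroup Γ] (k : ℤ) (D : ℤ × Γ → ℂ) (τ σ : ℂ)
    (c : Γ →+ ℂ) (i : HeckeIndex Γ) : ℂ :=
  eTwoPiI σ ^ i.ℓ * (i.ℓ : ℂ) ^ (k - 1) * (i.d : ℂ) ^ (-k) * D (i.n, i.γ) *
    eTwoPiI ((i.n : ℂ) * ((i.a : ℂ) * τ + (i.b : ℂ)) / (i.d : ℂ) + (i.a : ℂ) * c i.γ)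

/-- The Hecke transform `Φ_k|V_ℓ := ℓ^{k−1} Σ_{ad=ℓ} Σ_{b=0}^{d−1} d^{−k}
Σ_{(n,γ)} D(n,γ) e[ n(aτ+b)/d + a·c(γ) ]` for `ℓ ≥ 1`. -/
noncomputable def heckeTransform {Γ : Type*} [AddCommGroup Γ] (k : ℤ) (D : ℤ × Γ → ℂ) (τ : ℂ)
    (c : Γ →+ ℂ) (ℓ : ℕ) : ℂ :=
  (ℓ : ℂ) ^ (k - 1) *
    ∑ ad ∈ Nat.divisorsAntidiagonal ℓ, ∑ b ∈ Finset.range ad.2,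
      (ad.2 : ℂ) ^ (-k) *
        ∑' ng : ℤ × Γ, D ng *
          eTwoPiI ((ng.1 : ℂ) * ((ad.1 : ℂ) * τ + (b : ℂ)) / (ad.2 : ℂ) + (ad.1 : ℂ) * c ng.2)

/-!
In `Φ_k|V_ℓ` the sum over `b mod d` of `e[nb/d]` is `d` if `d ∣ n` and `0` otherwise, so only the
terms with `n = dm` survive; for them `ℓ^{k-1} d^{-k} · d = a^{k-1}` and
`e[dm(aτ + b)/d + a c(γ)] = (qᵐ ζ^γ)^a`, whence
`p^ℓ Φ_k|V_ℓ = Σ_{ad = ℓ} Σ_{m,γ} D(dm, γ) a^{k-1} (p^d qᵐ ζ^γ)^a`.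
Summing over `ℓ` and regrouping the pairs `(a, d)` gives the polylogarithms in `a`. Every
rearrangement is licensed by absolute convergence: the `d` Hecke indices `b mod d` over a term
with `d ∣ n` all have norm `1/d` of the corresponding polylogarithm term.
-/

lemma eTwoPiI_add (w z : ℂ) : eTwoPiI (w + z) = eTwoPiI w * eTwoPiI z := by
  simp only [eTwoPiI, mul_add, Complex.exp_add]

lemma eTwoPiI_ne_zero (w : ℂ) : eTwoPiI w ≠ 0 :=
  Complex.exp_ne_zero _

lemma eTwoPiI_int_mul (m : ℤ) (w : ℂ) : eTwoPiI (m * w) = eTwoPiI w ^ m := by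
  rw [eTwoPiI, eTwoPiI, ← Complex.exp_int_mul]
  ring_nf

lemma eTwoPiI_nat_mul (m : ℕ) (w : ℂ) : eTwoPiI (m * w) = eTwoPiI w ^ m := by
  exact_mod_cast eTwoPiI_int_mul m w

lemma eTwoPiI_intCast (m : ℤ) : eTwoPiI m = 1 := by
  rw [eTwoPiI, mul_comm, Complex.exp_int_mul_two_pi_mul_I]

lemma eTwoPiI_eq_one_iff {w : ℂ} : eTwoPiI w = 1 ↔ ∃ m : ℤ, w = m := by
  have h : (2 * Real.pi * Complex.I : ℂ) ≠ 0 := by simp [Real.pi_ne_zero]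
  simp only [eTwoPiI, Complex.exp_eq_one_iff]
  refine exists_congr fun m => ⟨fun hm => mul_left_cancel₀ h (by rw [hm]; ring), ?_⟩
  rintro rfl
  ring

lemma eTwoPiI_div_eq_one_iff {d : ℕ} (hd : d ≠ 0) (n : ℤ) :
    eTwoPiI (n / d) = 1 ↔ (d : ℤ) ∣ n := by
  have hd' : (d : ℂ) ≠ 0 := Nat.cast_ne_zero.mpr hd
  rw [eTwoPiI_eq_one_iff]
  refine exists_congr fun m => ?_
  rw [div_eq_iff hd', mul_comm]
  norm_cast

lemma sum_range_eTwoPiI_mul_div {d : ℕ} (hd : d ≠ 0) (n : ℤ) :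
    ∑ b ∈ Finset.range d, eTwoPiI (n * b / d) = if (d : ℤ) ∣ n then (d : ℂ) else 0 := by
  have hpow (b : ℕ) : eTwoPiI (n * b / d) = eTwoPiI (n / d) ^ b := by
    rw [← eTwoPiI_nat_mul]
    ring_nf
  simp only [hpow]
  split_ifs with hn
  · simp [(eTwoPiI_div_eq_one_iff hd n).mpr hn]
  · have hd' : (d : ℂ) ≠ 0 := Nat.cast_ne_zero.mpr hd
    rw [geom_sum_eq (mt (eTwoPiI_div_eq_one_iff hd n).mp hn), ← eTwoPiI_nat_mul,
      mul_div_cancel₀ _ hd', eTwoPiI_intCast, sub_self, zero_div]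

lemma tsum_ite_dvd_fst {α X : Type*} [AddCommMonoid α] [TopologicalSpace α] {d : ℤ} (hd : d ≠ 0)
    (f : ℤ × X → α) :
    ∑' p : ℤ × X, (if d ∣ p.1 then f p else 0) = ∑' p : ℤ × X, f (d * p.1, p.2) := by
  have hinj : Function.Injective fun p : ℤ × X => (d * p.1, p.2) := fun p q h => by
    simp only [Prod.mk.injEq, mul_right_inj' hd] at h
    exact Prod.ext h.1 h.2
  rw [← hinj.tsum_eq]
  · simp
  · rintro ⟨n, x⟩ hp
    obtain ⟨m, rfl⟩ : d ∣ n := by by_contra h; simp [h] at hp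
    exact ⟨(m, x), rfl⟩

/-- `(a, d) ↦ (ad, (a, d))` on positive integers, shifted to start at `0`. -/
def prodEquivSigmaDivisorsAntidiagonal : ℕ × ℕ ≃ Σ ℓ : ℕ, (ℓ + 1).divisorsAntidiagonal where
  toFun p := ⟨(p.1 + 1) * (p.2 + 1) - 1, (p.1 + 1, p.2 + 1), by
    rw [Nat.mem_divisorsAntidiagonal]
    dsimp only
    have : 0 < (p.1 + 1) * (p.2 + 1) := by positivity
    exact ⟨by omega, by omega⟩⟩
  invFun z := (z.2.1.1 - 1, z.2.1.2 - 1)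
  left_inv _ := rfl
  right_inv := by
    rintro ⟨ℓ, ⟨a, d⟩, h⟩
    obtain ⟨had, -⟩ := Nat.mem_divisorsAntidiagonal.mp h
    rcases a with _ | a
    · simp at had
    rcases d with _ | d
    · simp at had
    dsimp only at had
    obtain rfl : (a + 1) * (d + 1) - 1 = ℓ := by omega
    rfl

section DivisorsAntidiagonal

variable {E : Type*} [NormedAddCommGroup E] (g : ℕ × ℕ → E)

lemma summable_norm_sum_divisorsAntidiagonal_succ
    (hg : Summable fun p : ℕ × ℕ => ‖g (p.1 + 1, p.2 + 1)‖) :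
    Summable fun ℓ : ℕ => ‖∑ x ∈ (ℓ + 1).divisorsAntidiagonal, g x‖ := by
  have hσ : Summable fun z : Σ ℓ : ℕ, (ℓ + 1).divisorsAntidiagonal => ‖g z.2‖ :=
    prodEquivSigmaDivisorsAntidiagonal.summable_iff.mp hg
  refine Summable.of_nonneg_of_le (fun _ => norm_nonneg _) (fun ℓ => ?_) hσ.sigma
  rw [Finset.tsum_subtype _ fun x => ‖g x‖]
  exact norm_sum_le _ _

lemma tsum_sum_divisorsAntidiagonal_succ [CompleteSpace E]
    (hg : Summable fun p : ℕ × ℕ => g (p.1 + 1, p.2 + 1)) :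
    ∑' ℓ : ℕ, ∑ x ∈ (ℓ + 1).divisorsAntidiagonal, g x = ∑' p : ℕ × ℕ, g (p.1 + 1, p.2 + 1) := by
  have hσ : Summable fun z : Σ ℓ : ℕ, (ℓ + 1).divisorsAntidiagonal => g z.2 :=
    prodEquivSigmaDivisorsAntidiagonal.summable_iff.mp hg
  calc ∑' ℓ : ℕ, ∑ x ∈ (ℓ + 1).divisorsAntidiagonal, g x
      = ∑' (ℓ : ℕ) (x : (ℓ + 1).divisorsAntidiagonal), g x := by simp only [Finset.tsum_subtype]
    _ = ∑' z : Σ ℓ : ℕ, (ℓ + 1).divisorsAntidiagonal, g z.2 := hσ.tsum_sigma.symm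
    _ = ∑' p : ℕ × ℕ, g (p.1 + 1, p.2 + 1) :=
      (prodEquivSigmaDivisorsAntidiagonal.tsum_eq fun z => g z.2).symm

end DivisorsAntidiagonal

/-- The Hecke indices with `d ∣ n`, parametrised by `(d - 1, n / d, γ, a - 1)` and `b`. -/
def embHeckeIndex {Γ : Type*} (y : Σ x : ℕ × ℤ × Γ × ℕ, Fin (x.1 + 1)) : HeckeIndex Γ :=
  ⟨(y.1.2.2.2 + 1) * (y.1.1 + 1), y.1.2.2.2 + 1, y.1.1 + 1, y.2, (y.1.1 + 1 : ℕ) * y.1.2.1,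
    y.1.2.2.1, Nat.one_le_iff_ne_zero.mpr (by positivity), by omega, by omega, rfl, y.2.2⟩

lemma embHeckeIndex_injective {Γ : Type*} : Function.Injective (embHeckeIndex (Γ := Γ)) := by
  rintro ⟨⟨ℓ, n, γ, h⟩, b⟩ ⟨⟨ℓ', n', γ', h'⟩, b'⟩ he
  have ha := congrArg HeckeIndex.a he
  have hd := congrArg HeckeIndex.d he
  have hb := congrArg HeckeIndex.b he
  have hn := congrArg HeckeIndex.n he
  have hγ := congrArg HeckeIndex.γ he
  simp only [embHeckeIndex] at ha hd hb hn hγ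
  obtain rfl : ℓ = ℓ' := by omega
  obtain rfl : h = h' := by omega
  obtain rfl : n = n' := mul_left_cancel₀ (by omega) hn
  obtain rfl : b = b' := Fin.ext hb
  rw [hγ]

def divisorPairEquiv {X : Type*} : (ℕ × ℕ) × (ℤ × X) ≃ ℕ × ℤ × X × ℕ where
  toFun y := (y.1.2, y.2.1, y.2.2, y.1.1)
  invFun x := ((x.2.2.2, x.1), (x.2.1, x.2.2.1))
  left_inv _ := rfl
  right_inv _ := rfl

def polylogIndexEquiv {X : Type*} : (ℕ × ℤ × X) × ℕ ≃ ℕ × ℤ × X × ℕ where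
  toFun w := (w.1.1, w.1.2.1, w.1.2.2, w.2)
  invFun x := ((x.1, x.2.1, x.2.2.1), x.2.2.2)
  left_inv _ := rfl
  right_inv _ := rfl

section Hecke

variable {Γ : Type*} [AddCommGroup Γ] (k : ℤ) (D : ℤ × Γ → ℂ) (τ σ : ℂ) (c : Γ →+ ℂ)

/-- The `(n, γ)`-term of `Φ_k((aτ + b)/d, a z)`. -/
noncomputable def fourierTerm (a d b : ℕ) (ng : ℤ × Γ) : ℂ :=
  D ng * eTwoPiI ((ng.1 : ℂ) * ((a : ℂ) * τ + (b : ℂ)) / (d : ℂ) + (a : ℂ) * c ng.2)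

noncomputable def polylogTerm (ℓ : ℕ) (n : ℤ) (γ : Γ) (h : ℕ) : ℂ :=
  D ((ℓ : ℤ) * n, γ) * (h : ℂ) ^ (k - 1) * (eTwoPiI σ ^ ℓ * eTwoPiI τ ^ n * eTwoPiI (c γ)) ^ h

lemma heckeTransform_eq (ℓ : ℕ) :
    heckeTransform k D τ c ℓ = (ℓ : ℂ) ^ (k - 1) * ∑ x ∈ ℓ.divisorsAntidiagonal,
      ∑ b ∈ Finset.range x.2, (x.2 : ℂ) ^ (-k) * ∑' ng, fourierTerm D τ c x.1 x.2 b ng :=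
  rfl

lemma heckeFamily_eq (i : HeckeIndex Γ) :
    heckeFamily k D τ σ c i = eTwoPiI σ ^ i.ℓ * (i.ℓ : ℂ) ^ (k - 1) * (i.d : ℂ) ^ (-k) *
      fourierTerm D τ c i.a i.d i.b (i.n, i.γ) := by
  simp only [heckeFamily, fourierTerm, mul_assoc]

variable {D τ c}

lemma fourierTerm_eq_mul {a d : ℕ} (hd : d ≠ 0) (b : ℕ) (ng : ℤ × Γ) :
    fourierTerm D τ c a d b ng = fourierTerm D τ c a d 0 ng * eTwoPiI (ng.1 * b / d) := by
  rw [fourierTerm, fourierTerm, mul_assoc, ← eTwoPiI_add]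
  congr 2
  field_simp
  push_cast
  ring

lemma fourierTerm_mul_fst {d : ℕ} (hd : d ≠ 0) (a b : ℕ) (m : ℤ) (γ : Γ) :
    fourierTerm D τ c a d b (d * m, γ) = D (d * m, γ) * (eTwoPiI τ ^ m * eTwoPiI (c γ)) ^ a := by
  have harg : ((d * m : ℤ) : ℂ) * (a * τ + b) / d + a * c γ = ((m * b : ℤ) : ℂ) +
      a * (m * τ + c γ) := by
    field_simp
    push_cast
    ring
  rw [fourierTerm, harg, eTwoPiI_add, eTwoPiI_intCast, one_mul, eTwoPiI_nat_mul, eTwoPiI_add,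
    eTwoPiI_int_mul]

lemma heckeCoeff_mul_fourierTerm {d : ℕ} (hd : d ≠ 0) (a b : ℕ) (m : ℤ) (γ : Γ) :
    eTwoPiI σ ^ (a * d) * ((a * d : ℕ) : ℂ) ^ (k - 1) * (d : ℂ) ^ (-k) *
      fourierTerm D τ c a d b (d * m, γ) = (d : ℂ)⁻¹ * polylogTerm k D τ σ c d m γ a := by
  have hd' : (d : ℂ) ≠ 0 := Nat.cast_ne_zero.mpr hd
  have hpow : (d : ℂ) ^ (k - 1) * (d : ℂ) ^ (-k) = (d : ℂ)⁻¹ := by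
    rw [← zpow_add₀ hd', show k - 1 + -k = -1 by ring, zpow_neg_one]
  rw [fourierTerm_mul_fst hd, polylogTerm, Nat.cast_mul, mul_zpow, mul_comm a d, pow_mul,
    ← hpow]
  ring

lemma sum_range_tsum_fourierTerm {a d : ℕ} (hd : d ≠ 0)
    (hs : ∀ b < d, Summable (fourierTerm D τ c a d b)) :
    ∑ b ∈ Finset.range d, ∑' ng, fourierTerm D τ c a d b ng =
      d * ∑' p : ℤ × Γ, fourierTerm D τ c a d 0 (d * p.1, p.2) := by
  rw [← Summable.tsum_finsetSum fun b hb => hs b (Finset.mem_range.mp hb)]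
  have hsum (ng : ℤ × Γ) : ∑ b ∈ Finset.range d, fourierTerm D τ c a d b ng =
      if (d : ℤ) ∣ ng.1 then fourierTerm D τ c a d 0 ng * d else 0 := by
    rw [Finset.sum_congr rfl fun b _ => fourierTerm_eq_mul hd b ng, ← Finset.mul_sum,
      sum_range_eTwoPiI_mul_div hd, mul_ite, mul_zero]
  rw [tsum_congr hsum, tsum_ite_dvd_fst (Nat.cast_ne_zero.mpr hd), tsum_mul_right, mul_comm]

lemma summable_fourierTerm (hS : Summable (heckeFamily k D τ σ c)) {a d b : ℕ} (ha : a ≠ 0)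
    (hb : b < d) : Summable (fourierTerm D τ c a d b) := by
  have hd : d ≠ 0 := by omega
  let ι : ℤ × Γ → HeckeIndex Γ := fun ng =>
    ⟨a * d, a, d, b, ng.1, ng.2, Nat.one_le_iff_ne_zero.mpr (mul_ne_zero ha hd),
      Nat.one_le_iff_ne_zero.mpr ha, Nat.one_le_iff_ne_zero.mpr hd, rfl, hb⟩
  have hι : Function.Injective ι := fun x y h =>
    Prod.ext (congrArg HeckeIndex.n h) (congrArg HeckeIndex.γ h)
  have hC : eTwoPiI σ ^ (a * d) * ((a * d : ℕ) : ℂ) ^ (k - 1) * (d : ℂ) ^ (-k) ≠ 0 := by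
    have : (d : ℂ) ≠ 0 := Nat.cast_ne_zero.mpr hd
    have : ((a * d : ℕ) : ℂ) ≠ 0 := Nat.cast_ne_zero.mpr (mul_ne_zero ha hd)
    have := eTwoPiI_ne_zero σ
    positivity
  rw [← summable_mul_left_iff hC]
  exact (hS.comp_injective hι).congr fun ng => heckeFamily_eq k D τ σ c (ι ng)

lemma eTwoPiI_pow_mul_heckeTransform (hS : Summable (heckeFamily k D τ σ c)) (ℓ : ℕ) :
    eTwoPiI σ ^ ℓ * heckeTransform k D τ c ℓ =
      ∑ x ∈ ℓ.divisorsAntidiagonal, ∑' p : ℤ × Γ, polylogTerm k D τ σ c x.2 p.1 p.2 x.1 := by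
  rw [heckeTransform_eq, ← mul_assoc, Finset.mul_sum]
  refine Finset.sum_congr rfl fun x hx => ?_
  obtain ⟨hxℓ, hℓ⟩ := Nat.mem_divisorsAntidiagonal.mp hx
  have ha : x.1 ≠ 0 := left_ne_zero_of_mul (hxℓ ▸ hℓ)
  have hd : x.2 ≠ 0 := right_ne_zero_of_mul (hxℓ ▸ hℓ)
  rw [← Finset.mul_sum,
    sum_range_tsum_fourierTerm hd fun b hb => summable_fourierTerm k σ hS ha hb,
    ← hxℓ, ← tsum_mul_left, ← tsum_mul_left, ← tsum_mul_left]
  refine tsum_congr fun p => ?_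
  rw [← mul_inv_cancel_left₀ (Nat.cast_ne_zero.mpr hd) (polylogTerm k D τ σ c _ _ _ _),
    ← heckeCoeff_mul_fourierTerm k σ hd]
  ring

lemma heckeFamily_embHeckeIndex (x : ℕ × ℤ × Γ × ℕ) (b : Fin (x.1 + 1)) :
    heckeFamily k D τ σ c (embHeckeIndex ⟨x, b⟩) =
      ((x.1 + 1 : ℕ) : ℂ)⁻¹ * polylogTerm k D τ σ c (x.1 + 1) x.2.1 x.2.2.1 (x.2.2.2 + 1) := by
  rw [heckeFamily_eq]
  exact heckeCoeff_mul_fourierTerm k σ (Nat.succ_ne_zero _) _ _ _ _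

lemma summable_norm_polylogTerm (habs : Summable fun i => ‖heckeFamily k D τ σ c i‖) :
    Summable fun x : ℕ × ℤ × Γ × ℕ =>
      ‖polylogTerm k D τ σ c (x.1 + 1) x.2.1 x.2.2.1 (x.2.2.2 + 1)‖ := by
  refine (habs.comp_injective embHeckeIndex_injective).sigma.congr fun x => ?_
  simp only [Function.comp_apply, heckeFamily_embHeckeIndex, norm_mul, norm_inv,
    Complex.norm_natCast, tsum_fintype, Finset.sum_const, Finset.card_univ, Fintype.card_fin,
    nsmul_eq_mul]
  field_simp

variable (hP : Summable fun x : ℕ × ℤ × Γ × ℕ =>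
  ‖polylogTerm k D τ σ c (x.1 + 1) x.2.1 x.2.2.1 (x.2.2.2 + 1)‖)
include hP

lemma summable_norm_tsum_polylogTerm :
    Summable fun q : ℕ × ℕ =>
      ‖∑' p : ℤ × Γ, polylogTerm k D τ σ c (q.2 + 1) p.1 p.2 (q.1 + 1)‖ := by
  have hP' := divisorPairEquiv.summable_iff.mpr hP
  refine Summable.of_nonneg_of_le (fun _ => norm_nonneg _) (fun q => ?_) hP'.prod
  exact norm_tsum_le_tsum_norm (hP'.prod_factor q)

lemma tsum_tsum_polylogTerm :
    ∑' q : ℕ × ℕ, ∑' p : ℤ × Γ, polylogTerm k D τ σ c (q.2 + 1) p.1 p.2 (q.1 + 1) =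
      ∑' x : ℕ × ℤ × Γ × ℕ, polylogTerm k D τ σ c (x.1 + 1) x.2.1 x.2.2.1 (x.2.2.2 + 1) := by
  have hsum : Summable fun y : (ℕ × ℕ) × (ℤ × Γ) =>
      polylogTerm k D τ σ c (y.1.2 + 1) y.2.1 y.2.2 (y.1.1 + 1) :=
    divisorPairEquiv.summable_iff.mpr hP.of_norm
  exact hsum.tsum_prod.symm.trans (divisorPairEquiv.tsum_eq fun x : ℕ × ℤ × Γ × ℕ =>
    polylogTerm k D τ σ c (x.1 + 1) x.2.1 x.2.2.1 (x.2.2.2 + 1))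

lemma tsum_polylogTerm_eq_tsum_mul_LiOneSubK :
    ∑' x : ℕ × ℤ × Γ × ℕ, polylogTerm k D τ σ c (x.1 + 1) x.2.1 x.2.2.1 (x.2.2.2 + 1) =
      ∑' x : ℕ × ℤ × Γ, D (((x.1 + 1 : ℕ) : ℤ) * x.2.1, x.2.2) *
        LiOneSubK k (eTwoPiI σ ^ (x.1 + 1) * eTwoPiI τ ^ x.2.1 * eTwoPiI (c x.2.2)) := by
  have hsum : Summable fun w : (ℕ × ℤ × Γ) × ℕ =>
      polylogTerm k D τ σ c (w.1.1 + 1) w.1.2.1 w.1.2.2 (w.2 + 1) :=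
    polylogIndexEquiv.summable_iff.mpr hP.of_norm
  refine (polylogIndexEquiv.tsum_eq _).symm.trans (hsum.tsum_prod.trans (tsum_congr fun x => ?_))
  simp only [LiOneSubK, ← tsum_mul_left, polylogTerm, mul_assoc]

end Hecke

theorem hecke_lift_eq_polylog_sum_general {Γ : Type*} [AddCommGroup Γ]
    (k : ℤ) (D : ℤ × Γ → ℂ)
    (τ σ : ℂ) (c : Γ →+ ℂ)
    (habs : Summable (fun i : HeckeIndex Γ => ‖heckeFamily k D τ σ c i‖)) :
    Summable (fun ℓ : ℕ => ‖eTwoPiI σ ^ (ℓ + 1) * heckeTransform k D τ c (ℓ + 1)‖) ∧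
    Summable (fun x : ℕ × ℤ × Γ × ℕ =>
      ‖D (((x.1 + 1 : ℕ) : ℤ) * x.2.1, x.2.2.1) * ((x.2.2.2 + 1 : ℕ) : ℂ) ^ (k - 1) *
        (eTwoPiI σ ^ (x.1 + 1) * eTwoPiI τ ^ x.2.1 * eTwoPiI (c x.2.2.1)) ^ (x.2.2.2 + 1)‖) ∧
    ∑' ℓ : ℕ, eTwoPiI σ ^ (ℓ + 1) * heckeTransform k D τ c (ℓ + 1)
      = ∑' x : ℕ × ℤ × Γ,
          D (((x.1 + 1 : ℕ) : ℤ) * x.2.1, x.2.2) *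
            LiOneSubK k (eTwoPiI σ ^ (x.1 + 1) * eTwoPiI τ ^ x.2.1 * eTwoPiI (c x.2.2)) := by
  have hP := summable_norm_polylogTerm k σ habs
  have hG := summable_norm_tsum_polylogTerm k σ hP
  have hlift (ℓ : ℕ) := eTwoPiI_pow_mul_heckeTransform k σ habs.of_norm (ℓ + 1)
  refine ⟨?_, hP, ?_⟩
  · simp only [hlift]
    exact summable_norm_sum_divisorsAntidiagonal_succ _ hG
  · rw [tsum_congr hlift, tsum_sum_divisorsAntidiagonal_succ _ hG.of_norm,
      tsum_tsum_polylogTerm k σ hP, tsum_polylogTerm_eq_tsum_mul_LiOneSubK k σ hP]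

/-- under the absolute-summability hypothesis,
`Σ_{ℓ≥1} p^ℓ (Φ_k|V_ℓ) = Σ_{ℓ≥1,(n,γ)} D(ℓn,γ) · Li_{1−k}(p^ℓ qⁿ ζ^γ)`,
with `p = e[σ]`, `q = e[τ]`, `ζ^γ = e[c(γ)]`, and all sums on both sides
converging absolutely. -/
theorem hecke_lift_eq_polylog_sum {Γ : Type*} [AddCommGroup Γ]
    (k : ℤ) (n₀ : ℕ) (D : ℤ × Γ → ℂ)
    (hD : ∀ (n : ℤ) (γ : Γ), n < -(n₀ : ℤ) → D (n, γ) = 0)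
    (τ σ : ℂ) (c : Γ →+ ℂ)
    (habs : Summable (fun i : HeckeIndex Γ => ‖heckeFamily k D τ σ c i‖)) :
    Summable (fun ℓ : ℕ => ‖eTwoPiI σ ^ (ℓ + 1) * heckeTransform k D τ c (ℓ + 1)‖) ∧
    Summable (fun x : ℕ × ℤ × Γ × ℕ =>
      ‖D (((x.1 + 1 : ℕ) : ℤ) * x.2.1, x.2.2.1) * ((x.2.2.2 + 1 : ℕ) : ℂ) ^ (k - 1) *
        (eTwoPiI σ ^ (x.1 + 1) * eTwoPiI τ ^ x.2.1 * eTwoPiI (c x.2.2.1)) ^ (x.2.2.2 + 1)‖) ∧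
    ∑' ℓ : ℕ, eTwoPiI σ ^ (ℓ + 1) * heckeTransform k D τ c (ℓ + 1)
      = ∑' x : ℕ × ℤ × Γ,
          D (((x.1 + 1 : ℕ) : ℤ) * x.2.1, x.2.2) *
            LiOneSubK k (eTwoPiI σ ^ (x.1 + 1) * eTwoPiI τ ^ x.2.1 * eTwoPiI (c x.2.2)) :=
  hecke_lift_eq_polylog_sum_general k D τ σ c habs
end

section
/- For all positive integers N and k, setting M := N + k, one has M^{(k−1)/2} · ∏_{j=1}^{N−1} (2 sin(π j/M))^{N−j} = M^{(N−1)/2} · ∏_{j=1}^{k−1} (2 sin(π j/M))^{k−j} (an identity of positive real numbers, where M^{(k−1)/2} denotes the real power). Equivalently, √N · Z_W(S³;N,k) = √k · Z_W(S³;k,N), where Z_W(S³;N,k) := (N · M^{N−1})^{−1/2} ∏_{j=1}^{N−1} (2 sin(π j/M))^{N−j} is the partition function of SU(N) Chern–Simons theory on S³ at level k. -/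
/-!
Write `s j = 2 sin (π j / M)`. Then `s (M - j) = s j`, and `∏_{j=1}^{M-1} s j = M` (the norm
of `∏ (1 - ζ^j) = M` for a primitive `M`-th root of unity `ζ`). Reflecting `j ↦ M - j` turns
`∏_{0<j<N} s j ^ (N - j)` into `∏_{k<j<M} s j ^ (j - k)`, so its square is
`∏_{0<j<M} s j ^ e_j` with `e_j = (N - j)₊ + (j - k)₊`. Since
`(k - 1) + e_j = (N - 1) + e'_j`, where `e'_j` is `e_j` with `N` and `k` exchanged, the two
nonnegative sides of the identity have the same square.
-/

open Real Finset

section CommMonoid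

variable {α : Type*} [CommMonoid α]

theorem Finset.prod_Icc_one_tsub_reflect (f : ℕ → α) (M : ℕ) :
    ∏ j ∈ Icc 1 (M - 1), f (M - j) = ∏ j ∈ Icc 1 (M - 1), f j :=
  prod_nbij' (M - ·) (M - ·) (by simp only [mem_Icc]; omega) (by simp only [mem_Icc]; omega)
    (by simp only [mem_Icc]; omega) (by simp only [mem_Icc]; omega) (fun _ _ ↦ rfl)

theorem Finset.prod_Icc_pow_tsub_eq_of_le (s : ℕ → α) {N L : ℕ} (h : N ≤ L + 1) :
    ∏ j ∈ Icc 1 (N - 1), s j ^ (N - j) = ∏ j ∈ Icc 1 L, s j ^ (N - j) :=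
  prod_subset (Icc_subset_Icc_right (show N - 1 ≤ L by omega)) fun j hjL hj ↦ by
    rw [mem_Icc] at hjL hj
    rw [Nat.sub_eq_zero_of_le (by omega), pow_zero]

variable (s : ℕ → α) {N k : ℕ}

theorem Finset.prod_Icc_pow_tsub_eq_prod_Icc_pow_tsub
    (hs : ∀ j ∈ Icc 1 (N + k - 1), s (N + k - j) = s j) :
    ∏ j ∈ Icc 1 (N - 1), s j ^ (N - j) = ∏ j ∈ Icc 1 (N + k - 1), s j ^ (j - k) := by
  rw [prod_Icc_pow_tsub_eq_of_le s (L := N + k - 1) (by omega), ← prod_Icc_one_tsub_reflect]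
  refine prod_congr rfl fun j hj ↦ ?_
  rw [hs j hj, show N - (N + k - j) = j - k by grind]

theorem Finset.sq_prod_Icc_pow_tsub (hs : ∀ j ∈ Icc 1 (N + k - 1), s (N + k - j) = s j) :
    (∏ j ∈ Icc 1 (N - 1), s j ^ (N - j)) ^ 2
      = ∏ j ∈ Icc 1 (N + k - 1), s j ^ ((N - j) + (j - k)) := by
  rw [sq]
  nth_rw 2 [prod_Icc_pow_tsub_eq_prod_Icc_pow_tsub s hs]
  rw [prod_Icc_pow_tsub_eq_of_le s (L := N + k - 1) (by omega), ← prod_mul_distrib]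
  simp only [pow_add]

theorem Finset.prod_pow_mul_sq_prod_Icc_pow_tsub_comm (hN : 0 < N) (hk : 0 < k)
    (hs : ∀ j ∈ Icc 1 (N + k - 1), s (N + k - j) = s j) :
    (∏ j ∈ Icc 1 (N + k - 1), s j) ^ (k - 1) * (∏ j ∈ Icc 1 (N - 1), s j ^ (N - j)) ^ 2
      = (∏ j ∈ Icc 1 (N + k - 1), s j) ^ (N - 1) *
          (∏ j ∈ Icc 1 (k - 1), s j ^ (k - j)) ^ 2 := by
  have hs' : ∀ j ∈ Icc 1 (k + N - 1), s (k + N - j) = s j := by rwa [add_comm k N]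
  rw [sq_prod_Icc_pow_tsub s hs, sq_prod_Icc_pow_tsub s hs', add_comm k N, ← prod_pow,
    ← prod_pow, ← prod_mul_distrib, ← prod_mul_distrib]
  refine prod_congr rfl fun j hj ↦ ?_
  obtain ⟨hj, -⟩ := mem_Icc.mp hj
  rw [← pow_add, ← pow_add]
  congr 1
  omega

end CommMonoid

namespace Real

theorem sin_pi_mul_div_nonneg {j n : ℕ} (h : j ≤ n) : 0 ≤ sin (π * j / n) := by
  rw [mul_div_assoc]
  refine sin_nonneg_of_nonneg_of_le_pi (by positivity) (mul_le_of_le_one_right pi_pos.le ?_)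
  exact div_le_one_of_le₀ (Nat.cast_le.2 h) (Nat.cast_nonneg _)

theorem sin_pi_mul_tsub_div {j n : ℕ} (h : j ≤ n) :
    sin (π * (n - j : ℕ) / n) = sin (π * j / n) := by
  rcases eq_or_ne n 0 with rfl | hn
  · simp
  rw [Nat.cast_sub h, mul_sub, sub_div, mul_div_assoc, div_self (by positivity), mul_one,
    sin_pi_sub]

theorem rpow_div_two_mul_eq_of_pow_mul_sq_eq {x a b : ℝ} {m n : ℕ} (hx : 0 ≤ x) (ha : 0 ≤ a)
    (hb : 0 ≤ b) (h : x ^ m * a ^ 2 = x ^ n * b ^ 2) :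
    x ^ ((m : ℝ) / 2) * a = x ^ ((n : ℝ) / 2) * b := by
  refine (pow_left_inj₀ (by positivity) (by positivity) two_ne_zero).1 ?_
  rwa [mul_pow, mul_pow, ← rpow_mul_natCast hx, ← rpow_mul_natCast hx, Nat.cast_two,
    div_mul_cancel₀ _ two_ne_zero, div_mul_cancel₀ _ two_ne_zero, rpow_natCast, rpow_natCast]

end Real

namespace Complex

theorem norm_one_sub_exp_two_pi_I_div_pow {j n : ℕ} (h : j ≤ n) :
    ‖1 - exp (2 * π * I / n) ^ j‖ = 2 * Real.sin (π * j / n) := by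
  rw [← exp_nat_mul, norm_sub_rev, show (j : ℂ) * (2 * π * I / n) = I * ↑(2 * π * j / n) by
    push_cast; ring, norm_exp_I_mul_ofReal_sub_one, show 2 * π * j / n / 2 = π * j / n by ring,
    Real.norm_of_nonneg (mul_nonneg zero_le_two (Real.sin_pi_mul_div_nonneg h))]

end Complex

theorem Real.prod_Icc_two_mul_sin_pi_mul_div {n : ℕ} (hn : n ≠ 0) :
    ∏ j ∈ Icc 1 (n - 1), 2 * sin (π * j / n) = n := by
  obtain ⟨n, rfl⟩ := Nat.exists_eq_add_one_of_ne_zero hn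
  have hroot :=
    congrArg (‖·‖) (Complex.isPrimitiveRoot_exp (n + 1) hn).prod_one_sub_pow_eq_order
  rw [Complex.norm_prod, ← Nat.cast_add_one, Complex.norm_natCast] at hroot
  rw [Nat.add_sub_cancel, ← Ico_add_one_right_eq_Icc, prod_Ico_eq_prod_range, Nat.add_sub_cancel]
  refine (prod_congr rfl fun j hj ↦ ?_).trans hroot
  rw [Complex.norm_one_sub_exp_two_pi_I_div_pow (by simp at hj; omega), add_comm 1 j]

/-- level-rank duality of the SU(N) level k Chern–Simons partition
function on S³: for positive integers `N`, `k`, with `M := N + k`,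
`M^{(k−1)/2} ∏_{j=1}^{N−1} (2 sin(πj/M))^{N−j}
  = M^{(N−1)/2} ∏_{j=1}^{k−1} (2 sin(πj/M))^{k−j}`,
equivalently `√N · Z_W(S³;N,k) = √k · Z_W(S³;k,N)`. -/
theorem level_rank_duality (N k : ℕ) (hN : 0 < N) (hk : 0 < k) :
    ((N + k : ℕ) : ℝ) ^ (((k : ℝ) - 1) / 2) *
        ∏ j ∈ Finset.Icc 1 (N - 1), (2 * Real.sin (Real.pi * j / (N + k))) ^ (N - j)
      = ((N + k : ℕ) : ℝ) ^ (((N : ℝ) - 1) / 2) *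
        ∏ j ∈ Finset.Icc 1 (k - 1), (2 * Real.sin (Real.pi * j / (N + k))) ^ (k - j) := by
  set s : ℕ → ℝ := fun j ↦ 2 * sin (π * j / (N + k))
  have hsymm : ∀ j ∈ Icc 1 (N + k - 1), s (N + k - j) = s j := fun j hj ↦ by
    simpa only [s, Nat.cast_add] using
      congrArg (2 * ·) (sin_pi_mul_tsub_div (n := N + k) (by grind))
  have hprod : ∏ j ∈ Icc 1 (N + k - 1), s j = ((N + k : ℕ) : ℝ) := by
    simpa only [s, Nat.cast_add] using prod_Icc_two_mul_sin_pi_mul_div (n := N + k) (by omega)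
  have hnonneg : ∀ n ≤ N + k, 0 ≤ ∏ j ∈ Icc 1 (n - 1), s j ^ (n - j) := fun n hn ↦
    prod_nonneg fun j hj ↦ pow_nonneg (mul_nonneg zero_le_two (by
      simpa only [Nat.cast_add] using sin_pi_mul_div_nonneg (n := N + k) (by grind))) _
  have hsq := prod_pow_mul_sq_prod_Icc_pow_tsub_comm s hN hk hsymm
  rw [hprod] at hsq
  simpa only [Nat.cast_pred hN, Nat.cast_pred hk] using
    rpow_div_two_mul_eq_of_pow_mul_sq_eq (Nat.cast_nonneg _) (hnonneg N (by omega))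
      (hnonneg k (by omega)) hsq
end
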